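/- Let 0 ≤ μ < L < ∞, 0 < α ≤ β, D ∈ ℝ, N ≥ 1, and stepsizes h₀, …, h_{N−1} ∈ [0,1]. Let x₀, x_⋆, z₀, …, z_{N−1} ∈ E with x_{i+1} = (1 − h_i)·x_i + h_i·z_i for 0 ≤ i ≤ N−1, and let g_k ∈ E, f_k ∈ ℝ for k ∈ {0, …, N, ⋆} with g_⋆ ≠ 0. Then the following are equivalent. (A) There exist f ∈ F_{μ,L} and a nonempty closed convex set C ⊆ E that is α-strongly convex, β-smooth, with diam(C) ≤ D, such that: g_k is a subgradient of f at x_k and f(x_k) = f_k for all k ∈ {0, …, N, ⋆}; x₀ ∈ C; for each 0 ≤ i ≤ N−1, z_i ∈ C and ⟪g_i, z_i⟫ ≤ ⟪g_i, y⟫ for all y ∈ C; and x_⋆ ∈ C with f(x_⋆) ≤ f(y) for all y ∈ C. (B) The interpolation data with boundary pairs (z_i, −g_i) for 0 ≤ i ≤ N−1 together with (x_⋆, −g_⋆), and interior points (x_k, 0) for 0 ≤ k ≤ N, is interpolated by some nonempty closed convex α-strongly convex β-smooth set of diameter at most D; and the family (x_k, g_k, f_k)_{k∈{0,…,N,⋆}}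 is F_{μ,L}-interpolable. -/

import Mathlib

open Metric Set
open scoped RealInnerProductSpace Pointwise

noncomputable section

variable {F : Type*} [NormedAddCommGroup F] [InnerProductSpace ℝ F]

/-- The normal cone of a set `C` at a point `z`. -/
def normalCone (C : Set F) (z : F) : Set F :=
  {v | ∀ x ∈ C, ⟪v, x - z⟫ ≤ 0}

/-- A set `C` is `β`-smooth if at every boundary point `z`, every unit normal vector `n`
gives a closed ball of radius `1/β` centered at `z - (1/β) n` contained in `C`. -/
def IsSmoothSet (β : ℝ) (C : Set F) : Prop :=
  ∀ z ∈ frontier C, ∀ n ∈ normalCone C z, ‖n‖ = 1 →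
    closedBall (z - (1 / β) • n) (1 / β) ⊆ C

/-- A set `C` is `α`-strongly convex if at every boundary point `z`, every unit normal
vector `n` gives a closed ball of radius `1/α` centered at `z - (1/α) n` containing `C`. -/
def IsStronglyConvexSet (α : ℝ) (C : Set F) : Prop :=
  ∀ z ∈ frontier C, ∀ n ∈ normalCone C z, ‖n‖ = 1 →
    C ⊆ closedBall (z - (1 / α) • n) (1 / α)

/-- `diam C ≤ D`, expressed pointwise. -/
def DiamLE (C : Set F) (D : ℝ) : Prop :=
  ∀ x ∈ C, ∀ y ∈ C, ‖x - y‖ ≤ D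

/-- The `δ`-interior of a set: points whose closed `δ`-ball lies inside the set. -/
def deltaInterior (δ : ℝ) (C : Set F) : Set F :=
  {x | closedBall x δ ⊆ C}

/-- The set `C` interpolates the data: `z i ∈ C` with normal vector `v i`, and
`x k` lies in the `δ k`-interior of `C`. -/
def InterpolatedBy {ι κ : Type*} (C : Set F) (z v : ι → F) (x : κ → F) (δ : κ → ℝ) : Prop :=
  (∀ i, z i ∈ C ∧ v i ∈ normalCone C (z i)) ∧ ∀ k, x k ∈ deltaInterior (δ k) C

/-- The interpolation conditions `Interp(α, β, D; λ)`, with `n i = v i / ‖v i‖`,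
`r = 1/α - 1/β` and `s k = max 0 (δ k - 1/β)`. -/
def InterpCond {ι κ : Type*} (α β D lam : ℝ) (z v : ι → F) (x : κ → F) (δ : κ → ℝ) : Prop :=
  ∃ w : κ → F,
    (∀ i j, ‖z i - (1 / α) • (‖v i‖⁻¹ • v i) - (z j - (1 / β) • (‖v j‖⁻¹ • v j))‖ ≤
      1 / α - 1 / β) ∧
    (∀ i k, ‖z i - (1 / α) • (‖v i‖⁻¹ • v i) - w k‖ ≤
      (1 / α - 1 / β) - max 0 (δ k - 1 / β)) ∧
    (∀ k, ‖x k - w k‖ ≤ 1 / β - δ k + max 0 (δ k - 1 / β)) ∧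
    (∀ i j, ‖z i - (1 / β) • (‖v i‖⁻¹ • v i) - (z j - (1 / β) • (‖v j‖⁻¹ • v j))‖ ≤
      lam * (D - 2 / β)) ∧
    (∀ i k, ‖z i - (1 / β) • (‖v i‖⁻¹ • v i) - w k‖ ≤
      lam * (D - 2 / β) - max 0 (δ k - 1 / β)) ∧
    (∀ k l, ‖w k - w l‖ ≤ lam * (D - 2 / β) - max 0 (δ k - 1 / β) - max 0 (δ l - 1 / β))

/-- `g` is a subgradient of `f` at `x`. -/
def IsSubgradientOf (f : F → ℝ) (g x : F) : Prop :=
  ∀ u, f x + ⟪g, u - x⟫ ≤ f u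

/-- The class `F_{μ,L}` of `μ`-strongly convex, `L`-smooth convex functions. -/
def MemFclass (μ L : ℝ) (f : F → ℝ) : Prop :=
  ConvexOn ℝ Set.univ f ∧
  ∀ x y g, IsSubgradientOf f g x →
    f y ≤ f x + ⟪g, y - x⟫ + L / 2 * ‖y - x‖ ^ 2 ∧
    f x + ⟪g, y - x⟫ + μ / 2 * ‖y - x‖ ^ 2 ≤ f y

/-!
The iterates stay in `C` because each is a convex combination of points of `C`, and the
linear-minimization property of `zᵢ` is literally `-gᵢ ∈ N_C(zᵢ)`. The only analytic point is at
`x⋆`: a subgradient `g⋆` together with `-g⋆ ∈ N_C(x⋆)` makes `x⋆` a minimizer of `f` on `C`, and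
conversely the `L`-smooth upper bound lets minimality on the segment from `x⋆` to any `y ∈ C`
pass to the first-order condition `⟪g⋆, y - x⋆⟫ ≥ 0`.
-/

lemma deltaInterior_zero {E : Type*} [NormedAddCommGroup E] (C : Set E) :
    deltaInterior 0 C = C := by
  ext x
  simp [deltaInterior]

lemma neg_mem_normalCone_iff {C : Set F} {z g : F} :
    -g ∈ normalCone C z ↔ ∀ y ∈ C, ⟪g, z⟫ ≤ ⟪g, y⟫ := by
  simp only [normalCone, mem_ofPred_eq, inner_neg_left, inner_sub_right]
  exact forall₂_congr fun _ _ => by constructor <;> intro h <;> linarith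

lemma Convex.mem_of_convexComb_iterate {C : Set F} (hC : Convex ℝ C) {N : ℕ} {h : ℕ → ℝ}
    (hh : ∀ i < N, h i ∈ Icc (0 : ℝ) 1) {x z : ℕ → F}
    (hiter : ∀ i < N, x (i + 1) = (1 - h i) • x i + h i • z i)
    (hx₀ : x 0 ∈ C) (hz : ∀ i < N, z i ∈ C) : ∀ k ≤ N, x k ∈ C := by
  intro k
  induction k with
  | zero => exact fun _ => hx₀
  | succ i ih =>
    intro (hi : i < N)
    rw [hiter i hi]
    exact hC (ih hi.le) (hz i hi) (by linarith [(hh i hi).2]) (hh i hi).1 (by ring)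

lemma nonneg_of_forall_pos_nonneg_add_mul {a b : ℝ}
    (h : ∀ t : ℝ, 0 < t → t ≤ 1 → 0 ≤ a + t * b) : 0 ≤ a := by
  have hlim : Filter.Tendsto (fun t : ℝ => a + t * b) (nhdsWithin 0 (Ioi 0)) (nhds a) := by
    have : Continuous fun t : ℝ => a + t * b := by fun_prop
    simpa using (this.tendsto 0).mono_left nhdsWithin_le_nhds
  refine ge_of_tendsto hlim ?_
  filter_upwards [Ioc_mem_nhdsGT (zero_lt_one' ℝ)] with t ht using h t ht.1 ht.2

lemma IsSubgradientOf.isMinOn_of_neg_mem_normalCone {f : F → ℝ} {C : Set F} {g x : F}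
    (hg : IsSubgradientOf f g x) (hn : -g ∈ normalCone C x) : IsMinOn f C x :=
  isMinOn_iff.2 fun y hy => by
    have := hg y
    rw [inner_sub_right] at this
    linarith [neg_mem_normalCone_iff.1 hn y hy]

lemma neg_mem_normalCone_of_isMinOn {f : F → ℝ} {C : Set F} {g x : F} {L : ℝ}
    (hC : Convex ℝ C) (hx : x ∈ C) (hmin : IsMinOn f C x)
    (hL : ∀ y, f y ≤ f x + ⟪g, y - x⟫ + L / 2 * ‖y - x‖ ^ 2) : -g ∈ normalCone C x := by
  refine neg_mem_normalCone_iff.2 fun y hy => ?_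
  suffices 0 ≤ ⟪g, y - x⟫ by rw [inner_sub_right] at this; linarith
  refine nonneg_of_forall_pos_nonneg_add_mul (b := L / 2 * ‖y - x‖ ^ 2) fun t ht ht1 => ?_
  have hdecrease := isMinOn_iff.1 hmin _ (hC.add_smul_sub_mem hx hy ⟨ht.le, ht1⟩)
  have hquad := hL (x + t • (y - x))
  simp only [add_sub_cancel_left, real_inner_smul_right, norm_smul, mul_pow,
    Real.norm_eq_abs, sq_abs] at hquad
  refine (mul_nonneg_iff_of_pos_left ht).1 ?_
  linarith

theorem frankWolfe_interpolation_exterior_general {d : ℕ} (μ L α β D : ℝ)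
    (N : ℕ) (h : ℕ → ℝ) (hh : ∀ i < N, h i ∈ Set.Icc (0 : ℝ) 1)
    (x z g : ℕ → EuclideanSpace ℝ (Fin d)) (xstar gstar : EuclideanSpace ℝ (Fin d))
    (fv : ℕ → ℝ) (fstar : ℝ)
    (hiter : ∀ i < N, x (i + 1) = (1 - h i) • x i + h i • z i) :
    (∃ f : EuclideanSpace ℝ (Fin d) → ℝ, ∃ C : Set (EuclideanSpace ℝ (Fin d)),
        MemFclass μ L f ∧ C.Nonempty ∧ IsClosed C ∧ Convex ℝ C ∧
        IsStronglyConvexSet α C ∧ IsSmoothSet β C ∧ DiamLE C D ∧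
        (∀ k ≤ N, IsSubgradientOf f (g k) (x k) ∧ f (x k) = fv k) ∧
        IsSubgradientOf f gstar xstar ∧ f xstar = fstar ∧
        x 0 ∈ C ∧
        (∀ i < N, z i ∈ C ∧ ∀ y ∈ C, ⟪g i, z i⟫ ≤ ⟪g i, y⟫) ∧
        xstar ∈ C ∧ (∀ y ∈ C, f xstar ≤ f y)) ↔
      ((∃ C : Set (EuclideanSpace ℝ (Fin d)), C.Nonempty ∧ IsClosed C ∧ Convex ℝ C ∧
          IsStronglyConvexSet α C ∧ IsSmoothSet β C ∧ DiamLE C D ∧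
          (∀ i < N, z i ∈ C ∧ -g i ∈ normalCone C (z i)) ∧
          (xstar ∈ C ∧ -gstar ∈ normalCone C xstar) ∧
          (∀ k ≤ N, x k ∈ deltaInterior 0 C)) ∧
       (∃ f : EuclideanSpace ℝ (Fin d) → ℝ, MemFclass μ L f ∧
          (∀ k ≤ N, f (x k) = fv k ∧ IsSubgradientOf f (g k) (x k)) ∧
          f xstar = fstar ∧ IsSubgradientOf f gstar xstar)) := by
  constructor
  · rintro ⟨f, C, hf, hne, hcl, hcv, hsc, hsm, hdm, hsub, hgs, hfs, hx₀, hz, hxs, hmin⟩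
    have hxC := hcv.mem_of_convexComb_iterate hh hiter hx₀ fun i hi => (hz i hi).1
    refine ⟨⟨C, hne, hcl, hcv, hsc, hsm, hdm,
        fun i hi => ⟨(hz i hi).1, neg_mem_normalCone_iff.2 (hz i hi).2⟩,
        ⟨hxs, neg_mem_normalCone_of_isMinOn hcv hxs (isMinOn_iff.2 hmin)
          fun y => (hf.2 xstar y gstar hgs).1⟩,
        fun k hk => (deltaInterior_zero C).symm ▸ hxC k hk⟩,
      ⟨f, hf, fun k hk => (hsub k hk).symm, hfs, hgs⟩⟩
  · rintro ⟨⟨C, hne, hcl, hcv, hsc, hsm, hdm, hz, ⟨hxs, hns⟩, hint⟩, ⟨f, hf, hsub, hfs, hgs⟩⟩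
    refine ⟨f, C, hf, hne, hcl, hcv, hsc, hsm, hdm, fun k hk => (hsub k hk).symm, hgs, hfs,
      deltaInterior_zero C ▸ hint 0 N.zero_le,
      fun i hi => ⟨(hz i hi).1, neg_mem_normalCone_iff.1 (hz i hi).2⟩, hxs,
      isMinOn_iff.1 (hgs.isMinOn_of_neg_mem_normalCone hns)⟩

/-- Frank–Wolfe interpolation (exterior optimum case `g⋆ ≠ 0`): existence of an objective
`f ∈ F_{μ,L}` and a structured constraint set `C` consistent with the Frank–Wolfe data is
equivalent to separate set interpolability of the data `S_{g⋆ ≠ 0}` and function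
interpolability of `(x_k, g_k, f_k)`. -/
theorem frankWolfe_interpolation_exterior {d : ℕ} (hd : 1 ≤ d) (μ L α β D : ℝ)
    (hμ : 0 ≤ μ) (hμL : μ < L) (hα : 0 < α) (hαβ : α ≤ β)
    (N : ℕ) (hN : 1 ≤ N) (h : ℕ → ℝ) (hh : ∀ i < N, h i ∈ Set.Icc (0 : ℝ) 1)
    (x z g : ℕ → EuclideanSpace ℝ (Fin d)) (xstar gstar : EuclideanSpace ℝ (Fin d))
    (fv : ℕ → ℝ) (fstar : ℝ)
    (hiter : ∀ i < N, x (i + 1) = (1 - h i) • x i + h i • z i)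
    (hgstar : gstar ≠ 0) :
    (∃ f : EuclideanSpace ℝ (Fin d) → ℝ, ∃ C : Set (EuclideanSpace ℝ (Fin d)),
        MemFclass μ L f ∧ C.Nonempty ∧ IsClosed C ∧ Convex ℝ C ∧
        IsStronglyConvexSet α C ∧ IsSmoothSet β C ∧ DiamLE C D ∧
        (∀ k ≤ N, IsSubgradientOf f (g k) (x k) ∧ f (x k) = fv k) ∧
        IsSubgradientOf f gstar xstar ∧ f xstar = fstar ∧
        x 0 ∈ C ∧
        (∀ i < N, z i ∈ C ∧ ∀ y ∈ C, ⟪g i, z i⟫ ≤ ⟪g i, y⟫) ∧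
        xstar ∈ C ∧ (∀ y ∈ C, f xstar ≤ f y)) ↔
      ((∃ C : Set (EuclideanSpace ℝ (Fin d)), C.Nonempty ∧ IsClosed C ∧ Convex ℝ C ∧
          IsStronglyConvexSet α C ∧ IsSmoothSet β C ∧ DiamLE C D ∧
          (∀ i < N, z i ∈ C ∧ -g i ∈ normalCone C (z i)) ∧
          (xstar ∈ C ∧ -gstar ∈ normalCone C xstar) ∧
          (∀ k ≤ N, x k ∈ deltaInterior 0 C)) ∧
       (∃ f : EuclideanSpace ℝ (Fin d) → ℝ, MemFclass μ L f ∧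
          (∀ k ≤ N, f (x k) = fv k ∧ IsSubgradientOf f (g k) (x k)) ∧
          f xstar = fstar ∧ IsSubgradientOf f gstar xstar)) :=
  frankWolfe_interpolation_exterior_general μ L α β D N h hh x z g xstar gstar fv fstar hiter
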